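/- Let (v, q_1,…,q_N, r_1,…,r_N) with potential V solve the mKPESCS and let (f, T_1,…,T_N) be an eigenfunction datum for this solution with f nowhere vanishing. Then the tuple (ṽ, q̃_1,…,q̃_N, r̃_1,…,r̃_N) defined by ṽ := v + f_x/f, q̃_j := q_j/f, and r̃_j := r_j·f − T_j solves the mKPESCS with potential Ṽ := V + f_y/f. (This is the auto-Bäcklund transformation G_1[f] of the mKP hierarchy with self-consistent sources of Theorem 6.1, in the case k=2, n=3.) -/

import Mathlib

noncomputable section

open Finset

abbrev Pt3 : Type := ℝ × ℝ × ℝ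

/-- partial derivative in the first coordinate `x`. -/
def px (F : Pt3 → ℝ) : Pt3 → ℝ := fun p => deriv (fun s => F (s, p.2.1, p.2.2)) p.1

/-- partial derivative in the second coordinate `y`. -/
def py (F : Pt3 → ℝ) : Pt3 → ℝ := fun p => deriv (fun s => F (p.1, s, p.2.2)) p.2.1

/-- partial derivative in the third coordinate `t`. -/
def pt (F : Pt3 → ℝ) : Pt3 → ℝ := fun p => deriv (fun s => F (p.1, p.2.1, s)) p.2.2

/-- The mKP equation with self-consistent sources (mKPESCS), with potential `V`
satisfying `V_x = v_y`. -/
def SolvesMKPESCS (N : ℕ) (v V : Pt3 → ℝ) (q r : Fin N → Pt3 → ℝ) : Prop :=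
  (∀ p : Pt3, px V p = py v p) ∧
  (∀ p : Pt3, 4 * pt v p - px (px (px v)) p - 3 * py V p - 6 * V p * px v p
      + 6 * (v p)^2 * px v p + 4 * px (fun p' => ∑ j, q j p' * r j p') p = 0) ∧
  (∀ j, ∀ p : Pt3, py (q j) p = px (px (q j)) p + 2 * v p * px (q j) p) ∧
  (∀ j, ∀ p : Pt3, py (r j) p = -(px (px (r j)) p) + 2 * v p * px (r j) p)

/-- An eigenfunction datum `(f, T₁, …, T_N)` for a solution of the mKPESCS. -/
def MKPEigenDatum (N : ℕ) (v V : Pt3 → ℝ) (q r : Fin N → Pt3 → ℝ)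
    (f : Pt3 → ℝ) (T : Fin N → Pt3 → ℝ) : Prop :=
  (∀ j, ∀ p : Pt3, px (T j) p = r j p * px f p) ∧
  (∀ j, ∀ p : Pt3, py (T j) p = r j p * px (px f) p - px (r j) p * px f p
      + 2 * v p * r j p * px f p) ∧
  (∀ p : Pt3, py f p = px (px f) p + 2 * v p * px f p) ∧
  (∀ p : Pt3, pt f p = px (px (px f)) p + 3 * v p * px (px f) p
      + (3/2) * (px v p + (v p)^2 + V p) * px f p + ∑ j, q j p * T j p)

open scoped ContDiff

namespace MKPaux

lemma one_le : (1 : WithTop ℕ∞) ≤ ∞ := WithTop.coe_le_coe.2 le_top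
lemma two_le : (2 : WithTop ℕ∞) ≤ ∞ := WithTop.coe_le_coe.2 le_top

def e1 : Pt3 := ((1:ℝ), (0:ℝ), (0:ℝ))
def e2 : Pt3 := ((0:ℝ), (1:ℝ), (0:ℝ))
def e3 : Pt3 := ((0:ℝ), (0:ℝ), (1:ℝ))

/-- directional derivative -/
def pd (w : Pt3) (F : Pt3 → ℝ) : Pt3 → ℝ := fun p => fderiv ℝ F p w

lemma smooth_pd {F : Pt3 → ℝ} (hF : ContDiff ℝ ∞ F) (w : Pt3) : ContDiff ℝ ∞ (pd w F) :=
  (hF.fderiv_right (m := ∞) le_rfl).clm_apply contDiff_const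

lemma diffAt {F : Pt3 → ℝ} (hF : ContDiff ℝ ∞ F) (p : Pt3) : DifferentiableAt ℝ F p :=
  (hF.differentiable (by simp)).differentiableAt

lemma px_eq {F : Pt3 → ℝ} (hF : ContDiff ℝ ∞ F) : px F = pd e1 F := by
  funext p
  have hcurve : HasDerivAt (fun s : ℝ => ((s, p.2.1, p.2.2) : Pt3)) e1 p.1 := by
    have := (hasDerivAt_id p.1).prodMk (hasDerivAt_const p.1 (p.2.1, p.2.2))
    simpa [e1, Prod.mk_zero_zero] using this
  exact ((diffAt hF p).hasFDerivAt.comp_hasDerivAt p.1 hcurve).deriv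

lemma py_eq {F : Pt3 → ℝ} (hF : ContDiff ℝ ∞ F) : py F = pd e2 F := by
  funext p
  have hcurve : HasDerivAt (fun s : ℝ => ((p.1, s, p.2.2) : Pt3)) e2 p.2.1 := by
    have := (hasDerivAt_const p.2.1 p.1).prodMk
      ((hasDerivAt_id p.2.1).prodMk (hasDerivAt_const p.2.1 p.2.2))
    simpa [e2] using this
  exact ((diffAt hF p).hasFDerivAt.comp_hasDerivAt p.2.1 hcurve).deriv

lemma pt_eq {F : Pt3 → ℝ} (hF : ContDiff ℝ ∞ F) : pt F = pd e3 F := by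
  funext p
  have hcurve : HasDerivAt (fun s : ℝ => ((p.1, p.2.1, s) : Pt3)) e3 p.2.2 := by
    have := (hasDerivAt_const p.2.2 p.1).prodMk
      ((hasDerivAt_const p.2.2 p.2.1).prodMk (hasDerivAt_id p.2.2))
    simpa [e3] using this
  exact ((diffAt hF p).hasFDerivAt.comp_hasDerivAt p.2.2 hcurve).deriv

lemma pd_add {F G : Pt3 → ℝ} (w : Pt3) (hF : ContDiff ℝ ∞ F) (hG : ContDiff ℝ ∞ G) :
    pd w (fun p => F p + G p) = fun p => pd w F p + pd w G p := by
  funext p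
  simp only [pd, fderiv_fun_add (diffAt hF p) (diffAt hG p), ContinuousLinearMap.add_apply]

lemma pd_sub {F G : Pt3 → ℝ} (w : Pt3) (hF : ContDiff ℝ ∞ F) (hG : ContDiff ℝ ∞ G) :
    pd w (fun p => F p - G p) = fun p => pd w F p - pd w G p := by
  funext p
  simp only [pd, fderiv_fun_sub (diffAt hF p) (diffAt hG p), ContinuousLinearMap.sub_apply]

lemma pd_mul {F G : Pt3 → ℝ} (w : Pt3) (hF : ContDiff ℝ ∞ F) (hG : ContDiff ℝ ∞ G) :
    pd w (fun p => F p * G p) = fun p => pd w F p * G p + F p * pd w G p := by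
  funext p
  simp only [pd, fderiv_fun_mul (diffAt hF p) (diffAt hG p), ContinuousLinearMap.add_apply,
    ContinuousLinearMap.smul_apply, smul_eq_mul]
  ring

lemma pd_const (w : Pt3) (c : ℝ) : pd w (fun _ => c) = fun _ => 0 := by
  funext p; simp [pd]

lemma pd_sq {F : Pt3 → ℝ} (w : Pt3) (hF : ContDiff ℝ ∞ F) :
    pd w (fun p => F p ^ 2) = fun p => 2 * F p * pd w F p := by
  have h : (fun p => F p ^ 2) = fun p => F p * F p := by funext p; ring
  rw [h, pd_mul w hF hF]; funext p; ring

lemma pd_div {F G : Pt3 → ℝ} (w : Pt3) (hF : ContDiff ℝ ∞ F) (hG : ContDiff ℝ ∞ G)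
    (hG0 : ∀ p, G p ≠ 0) :
    pd w (fun p => F p / G p) = fun p => (pd w F p * G p - F p * pd w G p) / G p ^ 2 := by
  have hQ : ContDiff ℝ ∞ (fun p => F p / G p) := hF.div hG hG0
  have hFQ : F = fun p => (F p / G p) * G p := by
    funext p; rw [div_mul_cancel₀ _ (hG0 p)]
  have hm := pd_mul w hQ hG
  funext p
  have h2 : pd w F p = pd w (fun p => (F p / G p) * G p) p := by rw [← hFQ]
  rw [hm] at h2
  have hG2 : G p ≠ 0 := hG0 p
  field_simp at h2 ⊢
  nlinarith [h2]

lemma pd_comm {F : Pt3 → ℝ} (hF : ContDiff ℝ ∞ F) (w w' : Pt3) :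
    pd w (pd w' F) = pd w' (pd w F) := by
  funext p
  have hd : DifferentiableAt ℝ (fderiv ℝ F) p :=
    ((hF.fderiv_right (m := ∞) le_rfl).differentiable (by simp)).differentiableAt
  have h1 : ∀ u u' : Pt3, pd u (pd u' F) p = fderiv ℝ (fderiv ℝ F) p u u' := by
    intro u u'
    show fderiv ℝ (fun q => (fderiv ℝ F q) u') p u = _
    rw [fderiv_clm_apply hd (differentiableAt_const u')]
    simp
  rw [h1, h1, (hF.contDiffAt.isSymmSndFDerivAt (by simpa using two_le)).eq]

end MKPaux

open MKPaux

set_option maxHeartbeats 4000000 in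
theorem mkpescs_autoBacklund_G1 (N : ℕ) (v V f : Pt3 → ℝ) (q r T : Fin N → Pt3 → ℝ)
    (hv : ContDiff ℝ (⊤ : ℕ∞) v) (hV : ContDiff ℝ (⊤ : ℕ∞) V)
    (hq : ∀ j, ContDiff ℝ (⊤ : ℕ∞) (q j)) (hr : ∀ j, ContDiff ℝ (⊤ : ℕ∞) (r j))
    (hf : ContDiff ℝ (⊤ : ℕ∞) f) (hT : ∀ j, ContDiff ℝ (⊤ : ℕ∞) (T j))
    (hsol : SolvesMKPESCS N v V q r)
    (hdat : MKPEigenDatum N v V q r f T)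
    (hf0 : ∀ p : Pt3, f p ≠ 0) :
    SolvesMKPESCS N
      (fun p => v p + px f p / f p)
      (fun p => V p + py f p / f p)
      (fun j => fun p => q j p / f p)
      (fun j => fun p => r j p * f p - T j p) := by
  obtain ⟨h1, h2, h3, h4⟩ := hsol
  obtain ⟨d1, d2, d3, d4⟩ := hdat
  have hv' : ContDiff ℝ ∞ v := hv.of_le (by simp)
  have hV' : ContDiff ℝ ∞ V := hV.of_le (by simp)
  have hf' : ContDiff ℝ ∞ f := hf.of_le (by simp)
  have hq' : ∀ j, ContDiff ℝ ∞ (q j) := fun j => (hq j).of_le (by simp)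
  have hr' : ∀ j, ContDiff ℝ ∞ (r j) := fun j => (hr j).of_le (by simp)
  have hT' : ∀ j, ContDiff ℝ ∞ (T j) := fun j => (hT j).of_le (by simp)
  have sF1 : ContDiff ℝ ∞ (pd e1 f) := smooth_pd hf' e1
  have sF2 : ContDiff ℝ ∞ (pd e1 (pd e1 f)) := smooth_pd sF1 e1
  have sF3 : ContDiff ℝ ∞ (pd e1 (pd e1 (pd e1 f))) := smooth_pd sF2 e1
  have sv1 : ContDiff ℝ ∞ (pd e1 v) := smooth_pd hv' e1
  have sv2 : ContDiff ℝ ∞ (pd e1 (pd e1 v)) := smooth_pd sv1 e1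
  have sV1 : ContDiff ℝ ∞ (pd e1 V) := smooth_pd hV' e1
  have sq1 : ∀ j, ContDiff ℝ ∞ (pd e1 (q j)) := fun j => smooth_pd (hq' j) e1
  have sr1 : ∀ j, ContDiff ℝ ∞ (pd e1 (r j)) := fun j => smooth_pd (hr' j) e1
  have sT1 : ∀ j, ContDiff ℝ ∞ (pd e1 (T j)) := fun j => smooth_pd (hT' j) e1
  have hSqr : ContDiff ℝ ∞ (fun p' => ∑ j, q j p' * r j p') :=
    ContDiff.sum fun j _ => (hq' j).mul (hr' j)
  have hSqT : ContDiff ℝ ∞ (fun p' => ∑ j, q j p' * T j p') :=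
    ContDiff.sum fun j _ => (hq' j).mul (hT' j)
  have sSqr : ContDiff ℝ ∞ (pd e1 (fun p' => ∑ j, q j p' * r j p')) := smooth_pd hSqr e1
  have sSqT : ContDiff ℝ ∞ (pd e1 (fun p' => ∑ j, q j p' * T j p')) := smooth_pd hSqT e1
  -- hypothesis conversions
  have H1 : ∀ p : Pt3, pd e1 V p = pd e2 v p := by
    intro p; have := h1 p
    simp only [px_eq hV', py_eq hv'] at this; exact this
  have HVY : pd e2 v = pd e1 V := by
    funext p; exact (H1 p).symm
  have FY : pd e2 f = fun p => pd e1 (pd e1 f) p + 2 * v p * pd e1 f p := by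
    funext p; have := d3 p
    simp only [py_eq hf', px_eq hf', px_eq sF1] at this; exact this
  have FT : pd e3 f = fun p => pd e1 (pd e1 (pd e1 f)) p + 3 * v p * pd e1 (pd e1 f) p
      + (3/2) * (pd e1 v p + (v p)^2 + V p) * pd e1 f p + ∑ j, q j p * T j p := by
    funext p; have := d4 p
    simp only [pt_eq hf', px_eq hf', px_eq sF1, px_eq sF2, px_eq hv'] at this; exact this
  have H2' : ∀ p : Pt3, 4 * pd e3 v p - pd e1 (pd e1 (pd e1 v)) p - 3 * pd e2 V p
      - 6 * V p * pd e1 v p + 6 * (v p)^2 * pd e1 v p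
      + 4 * pd e1 (fun p' => ∑ j, q j p' * r j p') p = 0 := by
    intro p; have := h2 p
    simp only [pt_eq hv', px_eq hv', px_eq sv1, px_eq sv2, py_eq hV', px_eq hSqr] at this
    exact this
  have D1 : ∀ j, pd e1 (T j) = fun p => r j p * pd e1 f p := by
    intro j; funext p; have := d1 j p
    simp only [px_eq (hT' j), px_eq hf'] at this; exact this
  have D2 : ∀ j, pd e2 (T j) = fun p => r j p * pd e1 (pd e1 f) p - pd e1 (r j) p * pd e1 f p
      + 2 * v p * r j p * pd e1 f p := by
    intro j; funext p; have := d2 j p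
    simp only [py_eq (hT' j), px_eq hf', px_eq sF1, px_eq (hr' j)] at this; exact this
  have H3 : ∀ j, pd e2 (q j) = fun p => pd e1 (pd e1 (q j)) p + 2 * v p * pd e1 (q j) p := by
    intro j; funext p; have := h3 j p
    simp only [py_eq (hq' j), px_eq (hq' j), px_eq (sq1 j)] at this; exact this
  have H4 : ∀ j, pd e2 (r j) = fun p => -(pd e1 (pd e1 (r j)) p) + 2 * v p * pd e1 (r j) p := by
    intro j; funext p; have := h4 j p
    simp only [py_eq (hr' j), px_eq (hr' j), px_eq (sr1 j)] at this; exact this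
  -- commutators
  have C21 : pd e2 (pd e1 f) = pd e1 (pd e2 f) := pd_comm hf' e2 e1
  have C31 : pd e3 (pd e1 f) = pd e1 (pd e3 f) := pd_comm hf' e3 e1
  have C21' : pd e2 (pd e1 (pd e1 f)) = pd e1 (pd e2 (pd e1 f)) := pd_comm sF1 e2 e1
  refine ⟨?_, ?_, ?_, ?_⟩
  · intro p
    simp only [px_eq hf', py_eq hf', FY]
    simp (disch := (solve
        | (intros; apply_rules [pow_ne_zero, hf0])
        | (fun_prop (disch := (intros; apply_rules [pow_ne_zero, hf0]))))) only
      [px_eq, py_eq, pt_eq, pd_add, pd_sub, pd_mul, pd_div, pd_sq, pd_const,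
       FY, HVY, C21, C21']
    field_simp
  · intro p
    have hqr : (fun p' => ∑ j, q j p' / f p' * (r j p' * f p' - T j p'))
        = fun p' => (∑ j, q j p' * r j p') - (∑ j, q j p' * T j p') / f p' := by
      funext p'
      rw [Finset.sum_div, ← Finset.sum_sub_distrib]
      refine Finset.sum_congr rfl fun j _ => ?_
      have h0 := hf0 p'
      field_simp
    simp only [px_eq hf', py_eq hf', FY, hqr]
    simp (disch := (solve
        | (intros; apply_rules [pow_ne_zero, hf0])
        | (fun_prop (disch := (intros; apply_rules [pow_ne_zero, hf0]))))) only
      [px_eq, py_eq, pt_eq, pd_add, pd_sub, pd_mul, pd_div, pd_sq, pd_const,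
       FY, FT, HVY, C21, C31, C21']
    have hvt : pd e3 v p = (pd e1 (pd e1 (pd e1 v)) p + 3 * pd e2 V p + 6 * V p * pd e1 v p
        - 6 * (v p)^2 * pd e1 v p - 4 * pd e1 (fun p' => ∑ j, q j p' * r j p') p)/4 := by
      have := H2' p; linarith
    rw [hvt]
    have h0 := hf0 p
    field_simp
    ring
  · intro j p
    have hqj : ContDiff ℝ ∞ (q j) := hq' j
    have sqj1 : ContDiff ℝ ∞ (pd e1 (q j)) := sq1 j
    simp only [px_eq hf', FY]
    simp (disch := (solve
        | (intros; apply_rules [pow_ne_zero, hf0])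
        | (fun_prop (disch := (intros; apply_rules [pow_ne_zero, hf0]))))) only
      [px_eq, py_eq, pd_add, pd_sub, pd_mul, pd_div, pd_sq, pd_const,
       FY, HVY, H3 j, C21, C21']
    have h0 := hf0 p
    field_simp
    ring
  · intro j p
    have hqj : ContDiff ℝ ∞ (q j) := hq' j
    have hrj : ContDiff ℝ ∞ (r j) := hr' j
    have hTj : ContDiff ℝ ∞ (T j) := hT' j
    have srj1 : ContDiff ℝ ∞ (pd e1 (r j)) := sr1 j
    have sTj1 : ContDiff ℝ ∞ (pd e1 (T j)) := sT1 j
    simp only [px_eq hf', FY]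
    simp (disch := (solve
        | (intros; apply_rules [pow_ne_zero, hf0])
        | (fun_prop (disch := (intros; apply_rules [pow_ne_zero, hf0]))))) only
      [px_eq, py_eq, pd_add, pd_sub, pd_mul, pd_div, pd_sq, pd_const,
       FY, HVY, H4 j, D1 j, D2 j, C21, C21']
    have h0 := hf0 p
    field_simp
    ring
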